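/- The packing dimension of C_{s,𝒟} equals limsup_n (−n ln N)/ln(s_n). -/

import Mathlib

open scoped ENNReal NNReal

/-- The `δ`-packing pre-measure: supremum of `∑ h(2rᵢ)` over countable disjoint families
of open balls with centers in `E` and radii at most `δ` (balls of radius `0` are empty
and serve as padding). -/
noncomputable def packPreδ {X : Type*} [PseudoMetricSpace X] (h : ℝ → ℝ) (E : Set X)
    (δ : ℝ) : ℝ≥0∞ :=
  ⨆ (x : ℕ → X) (r : ℕ → ℝ) (_ : ∀ i, x i ∈ E) (_ : ∀ i, 0 ≤ r i ∧ r i ≤ δ)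
    (_ : Pairwise (Function.onFun Disjoint fun i => Metric.ball (x i) (r i))),
    ∑' i, ENNReal.ofReal (h (2 * r i))

/-- The `h`-packing pre-measure `𝒫^h₀(E) = lim_{δ→0} 𝒫^h_δ(E)`. -/
noncomputable def packPre {X : Type*} [PseudoMetricSpace X] (h : ℝ → ℝ) (E : Set X) : ℝ≥0∞ :=
  ⨅ (δ : ℝ) (_ : 0 < δ), packPreδ h E δ

/-- The `h`-packing measure `𝒫^h(E) = inf {∑ᵢ 𝒫^h₀(Eᵢ) : E ⊆ ⋃ᵢ Eᵢ}`. -/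
noncomputable def packMeasure {X : Type*} [PseudoMetricSpace X] (h : ℝ → ℝ) (E : Set X) : ℝ≥0∞ :=
  ⨅ (c : ℕ → Set X) (_ : E ⊆ ⋃ i, c i), ∑' i, packPre h (c i)
/-- The packing dimension, defined from the packing measures `𝒫^b` (gauge `x ↦ x^b`). -/
noncomputable def packDim {X : Type*} [PseudoMetricSpace X] (E : Set X) : ℝ≥0∞ :=
  ⨆ (b : ℝ≥0) (_ : packMeasure (fun x => x ^ (b : ℝ)) E = ⊤), (b : ℝ≥0∞)

/-!
Write `f σ = ∑ sᵢ dᵢ(σᵢ)`. Codes agreeing before `n` have images within `κ Rₙ` of each other,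
while codes first differing at `k` have images at least `τ sₖ - κ Rₖ₊₁ ≥ (1 - M) τ sₖ` apart.
Since `Rₙ₊₁ ≤ M sₙ` forces `sₙ` and `Rₙ` to decay geometrically, the set is covered by
`O(Nⁿ)` sets of diameter `Rₙ₊₁`, and every cylinder of length `m` contains `Nⁿ⁻ᵐ` points that
are `(1 - M) τ sₙ`-separated.

Above the limsup `L`, sort the balls of a packing by radius into the bins `(Rₙ₊₁, Rₙ]`: the
centres in one bin lie in distinct covering sets, so the packing premeasure is bounded by
`∑ Nⁿ⁺ᶜ Rₙᵇ`, a series dominated by a geometric one. Below `L`, `Nⁿ sₙᵇ` is unbounded along a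
subsequence, so every set whose closure contains a relatively open piece of the compact set has
infinite packing premeasure; by Baire's theorem, every countable cover has such a member.
-/

open Metric Filter Set Topology Function

section Packing

variable {X : Type*} [PseudoMetricSpace X] {h : ℝ → ℝ}

theorem packPreδ_empty (δ : ℝ) : packPreδ h (∅ : Set X) δ = 0 :=
  ENNReal.iSup_eq_zero.2 fun _ => ENNReal.iSup_eq_zero.2 fun _ =>
    ENNReal.iSup_eq_zero.2 fun hx => absurd (hx 0) (notMem_empty _)

theorem packPre_empty : packPre h (∅ : Set X) = 0 :=
  le_antisymm ((iInf₂_le 1 one_pos).trans (packPreδ_empty 1).le) bot_le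

theorem packPre_le_packPreδ (E : Set X) {δ : ℝ} (hδ : 0 < δ) : packPre h E ≤ packPreδ h E δ :=
  iInf₂_le δ hδ

theorem packMeasure_le_packPre (E : Set X) : packMeasure h E ≤ packPre h E := by
  refine (iInf₂_le (fun i => if i = 0 then E else ∅)
    fun x hx => mem_iUnion.2 ⟨0, by simpa using hx⟩).trans ?_
  rw [tsum_eq_single 0 fun i hi => by simp [hi, packPre_empty]]
  simp

theorem sum_le_packPreδ {ι : Type*} [Fintype ι] {E : Set X} {δ : ℝ} (x : ι → X) (r : ι → ℝ)
    (hx : ∀ i, x i ∈ E) (hr : ∀ i, 0 ≤ r i ∧ r i ≤ δ)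
    (hdisj : Pairwise (Disjoint on fun i => ball (x i) (r i))) :
    ∑ i, ENNReal.ofReal (h (2 * r i)) ≤ packPreδ h E δ := by
  rcases isEmpty_or_nonempty ι with hι | ⟨⟨i₀⟩⟩
  · simp
  -- pad the family to an `ℕ`-indexed one by balls of radius `0`
  let e := Fintype.equivFin ι
  let x' : ℕ → X := fun j => if hj : j < Fintype.card ι then x (e.symm ⟨j, hj⟩) else x i₀
  let r' : ℕ → ℝ := fun j => if hj : j < Fintype.card ι then r (e.symm ⟨j, hj⟩) else 0
  have hx' : ∀ j, x' j ∈ E := fun j => by unfold x'; split <;> exact hx _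
  have hr' : ∀ j, 0 ≤ r' j ∧ r' j ≤ δ := fun j => by
    unfold r'; split
    exacts [hr _, ⟨le_rfl, (hr i₀).1.trans (hr i₀).2⟩]
  have hdisj' : Pairwise (Disjoint on fun j => ball (x' j) (r' j)) := by
    intro j k hjk
    simp only [onFun, x', r']
    split_ifs with hj hk hk
    · exact hdisj fun h => hjk (by simpa using congrArg Fin.val (e.symm.injective h))
    all_goals simp
  calc ∑ i, ENNReal.ofReal (h (2 * r i))
      = ∑ j ∈ Finset.range (Fintype.card ι), ENNReal.ofReal (h (2 * r' j)) := by
        rw [← e.symm.sum_comp, ← Fin.sum_univ_eq_sum_range]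
        simp [r']
    _ ≤ ∑' j, ENNReal.ofReal (h (2 * r' j)) := ENNReal.sum_le_tsum _
    _ ≤ packPreδ h E δ := le_iSup_of_le x' <| le_iSup_of_le r' <| le_iSup_of_le hx' <|
        le_iSup_of_le hr' <| le_iSup_of_le hdisj' le_rfl

theorem card_mul_le_packPreδ_of_subset_closure {ι : Type*} [Fintype ι] {c : Set X} {δ γ : ℝ}
    (hγ : 0 < γ) (hγδ : γ ≤ δ) (y : ι → X) (hy : ∀ i, y i ∈ closure c)
    (hsep : Pairwise fun i j => 4 * γ ≤ dist (y i) (y j)) :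
    Fintype.card ι * ENNReal.ofReal (h (2 * γ)) ≤ packPreδ h c δ := by
  choose z hzc hyz using fun i => Metric.mem_closure_iff.1 (hy i) γ hγ
  have hdisj : Pairwise (Disjoint on fun i => ball (z i) γ) := fun i j hij =>
    ball_disjoint_ball <| show γ + γ ≤ dist (z i) (z j) by
      have := dist_triangle4 (y i) (z i) (z j) (y j)
      linarith [hsep hij, hyz i, hyz j, dist_comm (z j) (y j)]
  simpa using sum_le_packPreδ z (fun _ => γ) hzc (fun _ => ⟨hγ.le, hγδ⟩) hdisj

theorem packMeasure_eq_top_of_isCompact {E : Set X} (hE : IsCompact E) (hne : E.Nonempty)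
    (htop : ∀ c : Set X, ∀ x ∈ E, ∀ ε > 0, E ∩ ball x ε ⊆ closure c → packPre h c = ⊤) :
    packMeasure h E = ⊤ := by
  refine iInf_eq_top.2 fun c => iInf_eq_top.2 fun hc => ?_
  have := hne.to_subtype
  have := isCompact_iff_compactSpace.1 hE
  obtain ⟨i, x, hx⟩ := nonempty_interior_of_iUnion_of_closed
    (fun i => isClosed_closure.preimage continuous_subtype_val :
      ∀ i, IsClosed ((↑) ⁻¹' closure (c i) : Set E))
    (eq_univ_of_forall fun z =>
      mem_iUnion.2 <| (mem_iUnion.1 (hc z.2)).imp fun _ hi => subset_closure hi)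
  obtain ⟨ε, hε, hball⟩ := Metric.isOpen_iff.1 isOpen_interior x hx
  have hsub : E ∩ ball (x : X) ε ⊆ closure (c i) := fun y ⟨hyE, hy⟩ =>
    mem_preimage.1 <| interior_subset (hball (show (⟨y, hyE⟩ : E) ∈ ball x ε from hy))
  exact ENNReal.tsum_eq_top_of_eq_top ⟨i, htop (c i) x x.2 ε hε hsub⟩

theorem exists_lt_le_of_tendsto_zero {ρ : ℕ → ℝ} (hρ : Tendsto ρ atTop (𝓝 0)) {r : ℝ}
    (hr : 0 < r) (hrρ : r ≤ ρ 0) : ∃ n, ρ (n + 1) < r ∧ r ≤ ρ n := by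
  classical
  have hex : ∃ n, ρ (n + 1) < r :=
    ((hρ.comp (tendsto_add_atTop_nat 1)).eventually_lt_const hr).exists
  refine ⟨Nat.find hex, Nat.find_spec hex, ?_⟩
  rcases hn : Nat.find hex with _ | n
  · exact hrρ
  · exact not_lt.1 (Nat.find_min hex (hn ▸ Nat.lt_succ_self n))

theorem injective_of_disjoint_balls {ι ι' : Type*} {x : ι → X} {r : ι → ℝ}
    (hdisj : Pairwise (Disjoint on fun i => ball (x i) (r i))) {A : ι' → Set X} {ρ : ℝ}
    (hA : ∀ j, ∀ y ∈ A j, ∀ z ∈ A j, dist y z ≤ ρ) (hr : ∀ i, ρ < r i) {J : ι → ι'}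
    (hJ : ∀ i, x i ∈ A (J i)) : Injective J := by
  intro i i' hJi
  by_contra hne
  have hdist : dist (x i) (x i') ≤ ρ := hA _ _ (hJ i) _ (hJi ▸ hJ i')
  have hri : 0 < r i := (dist_nonneg.trans (hA _ _ (hJ i) _ (hJ i))).trans_lt (hr i)
  exact (hdisj hne).notMem_of_mem_left (mem_ball_self hri) (mem_ball.2 (hdist.trans_lt (hr i')))
theorem tsum_indicator_le_card_mul {ι ι' : Type*} [Fintype ι'] {x : ι → X} {r : ι → ℝ}
    (hdisj : Pairwise (Disjoint on fun i => ball (x i) (r i))) {E : Set X} (hx : ∀ i, x i ∈ E)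
    {A : ι' → Set X} (hcov : E ⊆ ⋃ j, A j) {ρ : ℝ} (hA : ∀ j, ∀ y ∈ A j, ∀ z ∈ A j, dist y z ≤ ρ)
    {S : Set ι} (hS : ∀ i ∈ S, ρ < r i) (c : ℝ≥0∞) :
    ∑' i, S.indicator (fun _ => c) i ≤ Fintype.card ι' * c := by
  choose J hJ using fun i : S => mem_iUnion.1 (hcov (hx i))
  have hJinj : Injective J := injective_of_disjoint_balls
    (hdisj.comp_of_injective Subtype.val_injective) hA (fun i => hS i i.2) hJ
  calc ∑' i, S.indicator (fun _ => c) i = ∑' _ : S, c := (tsum_subtype S _).symm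
    _ ≤ ∑' _ : ι', c := ENNReal.tsum_comp_le_tsum_of_injective hJinj fun _ => c
    _ = Fintype.card ι' * c := by simp

theorem packPreδ_le_tsum_of_cover (hh : MonotoneOn h (Ici 0)) (hh₀ : h 0 ≤ 0) {E : Set X}
    {ρ : ℕ → ℝ} (hρ : Tendsto ρ atTop (𝓝 0)) {ι : ℕ → Type*} [∀ n, Fintype (ι n)]
    (A : ∀ n, ι n → Set X) (hcov : ∀ n, E ⊆ ⋃ j, A n j)
    (hA : ∀ n j, ∀ x ∈ A n j, ∀ y ∈ A n j, dist x y ≤ ρ (n + 1)) :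
    packPreδ h E (ρ 0) ≤ ∑' n, Fintype.card (ι n) * ENNReal.ofReal (h (2 * ρ n)) := by
  refine iSup_le fun x => iSup_le fun r => iSup_le fun hx => iSup_le fun hr =>
    iSup_le fun hdisj => ?_
  classical
  -- sort the balls by size: the `n`-th bin holds the radii in `(ρ (n + 1), ρ n]`
  choose bin hbin using fun i => (lt_or_ge 0 (r i)).elim
    (fun hpos => (exists_lt_le_of_tendsto_zero hρ hpos (hr i).2).imp fun _ h _ => h)
    fun hle => ⟨0, fun hpos => absurd hpos hle.not_gt⟩
  have hbin_le : ∀ n, ∑' i, (if n = bin i then ENNReal.ofReal (h (2 * r i)) else 0)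
      ≤ Fintype.card (ι n) * ENNReal.ofReal (h (2 * ρ n)) := by
    intro n
    set S := {i | 0 < r i ∧ bin i = n}
    have hle : ∀ i, (if n = bin i then ENNReal.ofReal (h (2 * r i)) else 0)
        ≤ S.indicator (fun _ => ENNReal.ofReal (h (2 * ρ n))) i := by
      intro i
      rw [indicator_apply]
      split_ifs with hn hS
      · have hρr : r i ≤ ρ n := hn ▸ (hbin i hS.1).2
        exact ENNReal.ofReal_le_ofReal <| hh (mem_Ici.2 (by linarith [(hr i).1]))
          (mem_Ici.2 (by linarith [(hr i).1])) (by linarith)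
      · have hri : r i = 0 := le_antisymm (not_lt.1 fun hpos => hS ⟨hpos, hn.symm⟩) (hr i).1
        simp [hri, ENNReal.ofReal_eq_zero.2 hh₀]
      all_goals simp
    have hS : ∀ i ∈ S, ρ (n + 1) < r i := fun i hi => hi.2 ▸ (hbin i hi.1).1
    exact (ENNReal.tsum_le_tsum hle).trans
      (tsum_indicator_le_card_mul hdisj hx (hcov n) (hA n) hS _)
  calc ∑' i, ENNReal.ofReal (h (2 * r i))
      = ∑' n, ∑' i, if n = bin i then ENNReal.ofReal (h (2 * r i)) else 0 := by
        rw [ENNReal.tsum_comm]; simp_rw [tsum_ite_eq]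
    _ ≤ _ := ENNReal.tsum_le_tsum hbin_le

theorem packDim_eq_of {E : Set X} {L : ℝ≥0∞}
    (hup : ∀ b b' : ℝ≥0, L < b' → b' < b → packMeasure (fun x => x ^ (b : ℝ)) E ≠ ⊤)
    (hlow : ∀ b b' : ℝ≥0, b < b' → (b' : ℝ≥0∞) < L → packMeasure (fun x => x ^ (b : ℝ)) E = ⊤) :
    packDim E = L := by
  refine le_antisymm (iSup₂_le fun b hb => not_lt.1 fun hLb => ?_)
    (ENNReal.le_of_forall_nnreal_lt fun b hb => ?_)
  · obtain ⟨b', hLb', hb'b⟩ := ENNReal.lt_iff_exists_nnreal_btwn.1 hLb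
    exact hup b b' hLb' (by exact_mod_cast hb'b) hb
  · obtain ⟨b', hbb', hb'L⟩ := ENNReal.lt_iff_exists_nnreal_btwn.1 hb
    exact le_iSup₂_of_le b (hlow b b' (by exact_mod_cast hbb') hb'L) le_rfl

end Packing

section Tail

variable {s R : ℕ → ℝ} {M : ℝ}

theorem tail_eq_add (hsum : Summable s) (hR : ∀ n, R n = ∑' i, s (n + i)) (n : ℕ) :
    R n = s n + R (n + 1) := by
  have h := (hsum.comp_injective (add_right_injective n)).tsum_eq_zero_add
  simp only [comp_apply, add_zero] at h
  rw [hR, hR, h]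
  exact congrArg _ (tsum_congr fun i => by rw [add_right_comm, add_assoc])

theorem tail_pos (hs : ∀ n, 0 < s n) (hsum : Summable s) (hR : ∀ n, R n = ∑' i, s (n + i))
    (n : ℕ) : 0 < R n := by
  rw [hR]
  exact (hsum.comp_injective (add_right_injective n)).tsum_pos (fun i => (hs _).le) 0 (hs _)

theorem tendsto_tail (hR : ∀ n, R n = ∑' i, s (n + i)) : Tendsto R atTop (𝓝 0) :=
  (tendsto_sum_nat_add s).congr fun n => by simp_rw [hR, add_comm]

theorem tail_succ_le_of_sep (hs : ∀ n, 0 < s n) (hsum : Summable s)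
    (hR : ∀ n, R n = ∑' i, s (n + i)) {κ τ : ℝ} (hτ : 0 < τ) (hτκ : τ ≤ κ)
    (hsep : ∀ n, κ * R (n + 1) ≤ M * (τ * s n)) (n : ℕ) : R (n + 1) ≤ M * s n := by
  have hκ : 0 < κ := hτ.trans_le hτκ
  have hM : 0 < M := pos_of_mul_pos_left
    ((mul_pos hκ (tail_pos hs hsum hR 1)).trans_le (hsep 0)) (mul_pos hτ (hs 0)).le
  refine le_of_mul_le_mul_left ((hsep n).trans ?_) hκ
  calc M * (τ * s n) ≤ M * (κ * s n) :=
        mul_le_mul_of_nonneg_left (mul_le_mul_of_nonneg_right hτκ (hs n).le) hM.le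
    _ = κ * (M * s n) := by ring

theorem self_le_tail (hs : ∀ n, 0 < s n) (hsum : Summable s) (hR : ∀ n, R n = ∑' i, s (n + i))
    (n : ℕ) : s n ≤ R n := by
  linarith [tail_eq_add hsum hR n, tail_pos hs hsum hR (n + 1)]

theorem pos_of_tail_succ_le (hs : ∀ n, 0 < s n) (hsum : Summable s)
    (hR : ∀ n, R n = ∑' i, s (n + i)) (hRM : ∀ n, R (n + 1) ≤ M * s n) : 0 < M :=
  pos_of_mul_pos_left ((tail_pos hs hsum hR 1).trans_le (hRM 0)) (hs 0).le

theorem succ_le_of_tail_succ_le (hs : ∀ n, 0 < s n) (hsum : Summable s)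
    (hR : ∀ n, R n = ∑' i, s (n + i)) (hRM : ∀ n, R (n + 1) ≤ M * s n) (n : ℕ) :
    s (n + 1) ≤ M * s n :=
  (self_le_tail hs hsum hR (n + 1)).trans (hRM n)

theorem antitone_of_tail_succ_le (hs : ∀ n, 0 < s n) (hsum : Summable s)
    (hR : ∀ n, R n = ∑' i, s (n + i)) (hRM : ∀ n, R (n + 1) ≤ M * s n) (hM : M ≤ 1) :
    Antitone s :=
  antitone_nat_of_succ_le fun n =>
    (succ_le_of_tail_succ_le hs hsum hR hRM n).trans (mul_le_of_le_one_left (hs n).le hM)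

theorem le_pow_mul_of_tail_succ_le (hs : ∀ n, 0 < s n) (hsum : Summable s)
    (hR : ∀ n, R n = ∑' i, s (n + i)) (hRM : ∀ n, R (n + 1) ≤ M * s n) (n : ℕ) :
    s n ≤ M ^ n * s 0 := by
  induction n with
  | zero => simp
  | succ n ih =>
    calc s (n + 1) ≤ M * s n := succ_le_of_tail_succ_le hs hsum hR hRM n
      _ ≤ M * (M ^ n * s 0) := by gcongr; exact (pos_of_tail_succ_le hs hsum hR hRM).le
      _ = M ^ (n + 1) * s 0 := by ring

theorem tail_add_le_of_tail_succ_le (hs : ∀ n, 0 < s n) (hsum : Summable s)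
    (hR : ∀ n, R n = ∑' i, s (n + i)) (hRM : ∀ n, R (n + 1) ≤ M * s n) (n k : ℕ) :
    R (n + k) ≤ M ^ k * R n := by
  have hM := pos_of_tail_succ_le hs hsum hR hRM
  induction k with
  | zero => simp
  | succ k ih =>
    calc R (n + k + 1) ≤ M * R (n + k) :=
          (hRM _).trans (by gcongr; exact self_le_tail hs hsum hR _)
      _ ≤ M * (M ^ k * R n) := by gcongr
      _ = M ^ (k + 1) * R n := by ring

theorem tail_le_of_tail_succ_le (hsum : Summable s) (hR : ∀ n, R n = ∑' i, s (n + i))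
    (hRM : ∀ n, R (n + 1) ≤ M * s n) (n : ℕ) : R n ≤ (1 + M) * s n := by
  linarith [tail_eq_add hsum hR n, hRM n]

theorem summable_pow_mul_tail_rpow (hs : ∀ n, 0 < s n) (hsum : Summable s)
    (hR : ∀ n, R n = ∑' i, s (n + i)) (hRM : ∀ n, R (n + 1) ≤ M * s n) (hM : M < 1) {N : ℕ}
    {b b' : ℝ} (hb' : 0 ≤ b') (hbb' : b' < b) (hev : ∀ᶠ n in atTop, (N : ℝ) ^ n ≤ s n ^ (-b')) :
    Summable fun n => (N : ℝ) ^ n * R n ^ b := by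
  have hM₀ := pos_of_tail_succ_le hs hsum hR hRM
  have hq : M ^ (b - b') < 1 := Real.rpow_lt_one hM₀.le hM (by linarith)
  refine .of_norm_bounded_eventually_nat ((summable_geometric_of_lt_one (by positivity) hq).mul_left
    ((1 + M) ^ b * s 0 ^ (b - b'))) ?_
  filter_upwards [hev] with n hn
  have hRn := tail_pos hs hsum hR n
  have hsn := hs n
  have hMn : 0 ≤ M ^ n := pow_nonneg hM₀.le n
  rw [Real.norm_of_nonneg (mul_nonneg (by positivity) (Real.rpow_nonneg hRn.le b))]
  calc (N : ℝ) ^ n * R n ^ b ≤ s n ^ (-b') * ((1 + M) ^ b * s n ^ b) := by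
        rw [← Real.mul_rpow (by linarith) hsn.le]
        refine mul_le_mul hn (Real.rpow_le_rpow hRn.le (tail_le_of_tail_succ_le hsum hR hRM n)
          (by linarith)) (Real.rpow_nonneg hRn.le b) (Real.rpow_nonneg hsn.le _)
    _ = (1 + M) ^ b * s n ^ (b - b') := by
        rw [sub_eq_neg_add, Real.rpow_add hsn]; ring
    _ ≤ (1 + M) ^ b * (M ^ n * s 0) ^ (b - b') := by
        gcongr
        exact le_pow_mul_of_tail_succ_le hs hsum hR hRM n
    _ = (1 + M) ^ b * s 0 ^ (b - b') * (M ^ (b - b')) ^ n := by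
        rw [Real.mul_rpow hMn (hs 0).le, Real.rpow_pow_comm hM₀.le]; ring

end Tail

section Exponent

theorem neg_log_div_log_lt_iff {a x b : ℝ} (ha : 0 < a) (hx₀ : 0 < x) (hx₁ : x < 1) :
    -Real.log a / Real.log x < b ↔ a < x ^ (-b) := by
  rw [div_lt_iff_of_neg (Real.log_neg hx₀ hx₁), ← Real.log_lt_log_iff ha (by positivity),
    Real.log_rpow hx₀]
  constructor <;> intro h <;> linarith

theorem lt_neg_log_div_log_iff {a x b : ℝ} (ha : 0 < a) (hx₀ : 0 < x) (hx₁ : x < 1) :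
    b < -Real.log a / Real.log x ↔ x ^ (-b) < a := by
  rw [lt_div_iff_of_neg (Real.log_neg hx₀ hx₁), ← Real.log_lt_log_iff (by positivity) ha,
    Real.log_rpow hx₀]
  constructor <;> intro h <;> linarith

variable {N : ℕ} {s : ℕ → ℝ}

theorem eventually_pow_le_rpow_of_limsup_lt (hN : 0 < N) (hs : ∀ n, 0 < s n)
    (hs₀ : Tendsto s atTop (𝓝 0)) {b : ℝ≥0}
    (hL : limsup (fun n : ℕ => ENNReal.ofReal (-((n : ℝ) * Real.log N) / Real.log (s n))) atTop
      < b) :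
    ∀ᶠ n in atTop, (N : ℝ) ^ n ≤ s n ^ (-(b : ℝ)) := by
  have hb : (0 : ℝ) < b := by
    have : (0 : ℝ≥0∞) < b := bot_le.trans_lt hL
    exact_mod_cast this
  filter_upwards [eventually_lt_of_limsup_lt hL, hs₀.eventually_lt_const one_pos] with n hn hs₁
  rw [← ENNReal.ofReal_coe_nnreal, ENNReal.ofReal_lt_ofReal_iff hb, ← Real.log_pow,
    neg_log_div_log_lt_iff (by positivity) (hs n) hs₁] at hn
  exact hn.le

theorem frequently_rpow_le_pow_of_lt_limsup (hN : 0 < N) (hs : ∀ n, 0 < s n)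
    (hs₀ : Tendsto s atTop (𝓝 0)) {b : ℝ≥0}
    (hL : (b : ℝ≥0∞)
      < limsup (fun n : ℕ => ENNReal.ofReal (-((n : ℝ) * Real.log N) / Real.log (s n))) atTop) :
    ∃ᶠ n in atTop, s n ^ (-(b : ℝ)) ≤ (N : ℝ) ^ n := by
  refine ((frequently_lt_of_lt_limsup (by isBoundedDefault) hL).and_eventually
    (hs₀.eventually_lt_const one_pos)).mono fun n ⟨hn, hs₁⟩ => ?_
  rw [← ENNReal.ofReal_coe_nnreal] at hn
  replace hn := (ENNReal.ofReal_lt_ofReal_iff_of_nonneg b.2).1 hn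
  rw [← Real.log_pow, lt_neg_log_div_log_iff (by positivity) (hs n) hs₁] at hn
  exact hn.le

theorem frequently_le_pow_sub_mul_rpow (hN : 0 < N) (hs : ∀ n, 0 < s n)
    (hs₀ : Tendsto s atTop (𝓝 0)) {b b' : ℝ} (hbb' : b < b')
    (hfreq : ∃ᶠ n in atTop, s n ^ (-b') ≤ (N : ℝ) ^ n) (m : ℕ) {c : ℝ} (hc : 0 < c) (A : ℝ) :
    ∃ᶠ k in atTop, A ≤ (N : ℝ) ^ (k - m) * (c * s k) ^ b := by
  have hN₁ : (1 : ℝ) ≤ N := by exact_mod_cast hN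
  have hgrow : Tendsto (fun k => c ^ b / (N : ℝ) ^ m * s k ^ (-(b' - b))) atTop atTop :=
    ((tendsto_rpow_neg_nhdsGT_zero (by linarith)).comp
      (tendsto_nhdsWithin_iff.2 ⟨hs₀, .of_forall hs⟩)).const_mul_atTop (by positivity)
  refine (hfreq.and_eventually (hgrow.eventually_ge_atTop A)).mono fun k ⟨hk, hA⟩ => hA.trans ?_
  have hsk : 0 ≤ s k ^ b := Real.rpow_nonneg (hs k).le b
  have hpow : (N : ℝ) ^ k / (N : ℝ) ^ m ≤ (N : ℝ) ^ (k - m) := by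
    rw [div_le_iff₀ (by positivity), ← pow_add]
    exact pow_le_pow_right₀ hN₁ (by omega)
  calc c ^ b / (N : ℝ) ^ m * s k ^ (-(b' - b))
      = c ^ b / (N : ℝ) ^ m * (s k ^ (-b') * s k ^ b) := by
        rw [← Real.rpow_add (hs k)]; ring_nf
    _ ≤ c ^ b / (N : ℝ) ^ m * ((N : ℝ) ^ k * s k ^ b) := by gcongr
    _ = (N : ℝ) ^ k / (N : ℝ) ^ m * (c ^ b * s k ^ b) := by ring
    _ ≤ (N : ℝ) ^ (k - m) * (c * s k) ^ b := by
        rw [Real.mul_rpow hc.le (hs k).le]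
        exact mul_le_mul_of_nonneg_right hpow (mul_nonneg (by positivity) hsk)

end Exponent

theorem exists_prefix_extensions {α : Type*} (σ : ℕ → α) (m k : ℕ) :
    ∃ F : (Fin (k - m) → α) → ℕ → α, (∀ w, ∀ i < m, F w i = σ i) ∧
      ∀ w w', w ≠ w' → ∃ j < k, (∀ i < j, F w i = F w' i) ∧ F w j ≠ F w' j := by
  classical
  let F : (Fin (k - m) → α) → ℕ → α := fun w i =>
    if h : m ≤ i ∧ i < k then w ⟨i - m, by omega⟩ else σ i
  refine ⟨F, fun w i hi => dif_neg (by omega), fun w w' hne => ?_⟩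
  have hF : F w ≠ F w' := fun heq => hne <| funext fun t => by
    simpa [F, show m ≤ m + t ∧ m + t < k by omega] using congrFun heq (m + t)
  have hout : ∀ i, ¬(m ≤ i ∧ i < k) → F w i = F w' i := fun i hi => by simp only [F, dif_neg hi]
  refine ⟨PiNat.firstDiff (F w) (F w'), not_le.1 fun hkj => PiNat.apply_firstDiff_ne hF
    (hout _ (by omega)), fun i => PiNat.apply_eq_of_lt_firstDiff, PiNat.apply_firstDiff_ne hF⟩

section CantorMap

variable {V : Type*} [NormedAddCommGroup V] [NormedSpace ℝ V] {α : Type*}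
  {s : ℕ → ℝ} {d : ℕ → α → V} {K κ : ℝ}

noncomputable def cantorMap (s : ℕ → ℝ) (d : ℕ → α → V) (σ : ℕ → α) : V := ∑' i, s i • d i (σ i)

theorem norm_smul_digit_le (hs : ∀ n, 0 ≤ s n) (hd : ∀ n a, ‖d n a‖ ≤ K) (n : ℕ) (a : α) :
    ‖s n • d n a‖ ≤ s n * K := by
  rw [norm_smul, Real.norm_of_nonneg (hs n)]
  exact mul_le_mul_of_nonneg_left (hd n a) (hs n)

variable [CompleteSpace V]

theorem summable_smul_digit (hs : ∀ n, 0 ≤ s n) (hsum : Summable s) (hd : ∀ n a, ‖d n a‖ ≤ K)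
    (σ : ℕ → α) : Summable fun i => s i • d i (σ i) :=
  .of_norm_bounded (hsum.mul_right K) fun i => norm_smul_digit_le hs hd i (σ i)

theorem continuous_cantorMap [TopologicalSpace α] [DiscreteTopology α] (hs : ∀ n, 0 ≤ s n)
    (hsum : Summable s) (hd : ∀ n a, ‖d n a‖ ≤ K) : Continuous (cantorMap s d) :=
  continuous_tsum (fun i => (continuous_of_discreteTopology.comp (continuous_apply i)).const_smul _)
    (hsum.mul_right K) fun i σ => norm_smul_digit_le hs hd i (σ i)

theorem norm_cantorMap_sub_le (hs : ∀ n, 0 ≤ s n) (hsum : Summable s) (hd : ∀ n a, ‖d n a‖ ≤ K)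
    (hκ : ∀ n a b, ‖d n a - d n b‖ ≤ κ) {σ σ' : ℕ → α} {n : ℕ} (hσ : ∀ i < n, σ i = σ' i) :
    ‖cantorMap s d σ - cantorMap s d σ'‖ ≤ κ * ∑' i, s (n + i) := by
  set g := fun i => s i • (d i (σ i) - d i (σ' i))
  have hfg : cantorMap s d σ - cantorMap s d σ' = ∑' i, g i := by
    rw [cantorMap, cantorMap, ← (summable_smul_digit hs hsum hd σ).tsum_sub
      (summable_smul_digit hs hsum hd σ')]
    simp [g, smul_sub]
  have hg : Summable g := by
    simpa [g, smul_sub] using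
      (summable_smul_digit hs hsum hd σ).sub (summable_smul_digit hs hsum hd σ')
  have hhead : ∑ i ∈ Finset.range n, g i = 0 :=
    Finset.sum_eq_zero fun i hi => by simp [g, hσ i (Finset.mem_range.1 hi)]
  have htail : ∀ i, ‖g (i + n)‖ ≤ s (i + n) * κ := fun i => by
    rw [norm_smul, Real.norm_of_nonneg (hs _)]
    exact mul_le_mul_of_nonneg_left (hκ _ _ _) (hs _)
  calc ‖cantorMap s d σ - cantorMap s d σ'‖ = ‖∑' i, g (i + n)‖ := by
        rw [hfg, ← hg.sum_add_tsum_nat_add n, hhead, zero_add]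
    _ ≤ ∑' i, s (i + n) * κ :=
        tsum_of_norm_bounded (((summable_nat_add_iff n).2 hsum).mul_right κ).hasSum htail
    _ = κ * ∑' i, s (n + i) := by simp_rw [tsum_mul_right, mul_comm κ, add_comm]

theorem le_norm_cantorMap_sub (hs : ∀ n, 0 ≤ s n) (hsum : Summable s) (hd : ∀ n a, ‖d n a‖ ≤ K)
    (hκ : ∀ n a b, ‖d n a - d n b‖ ≤ κ) {τ : ℝ} (hτ : ∀ n a b, a ≠ b → τ ≤ ‖d n a - d n b‖)
    {σ σ' : ℕ → α} {k : ℕ} (hσ : ∀ i < k, σ i = σ' i) (hk : σ k ≠ σ' k) :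
    τ * s k - κ * ∑' i, s (k + 1 + i) ≤ ‖cantorMap s d σ - cantorMap s d σ'‖ := by
  classical
  set σ'' := update σ' k (σ k)
  have hsingle : cantorMap s d σ'' - cantorMap s d σ' = s k • (d k (σ k) - d k (σ' k)) := by
    rw [cantorMap, cantorMap, ← (summable_smul_digit hs hsum hd _).tsum_sub
      (summable_smul_digit hs hsum hd _), tsum_eq_single k fun i hi => by simp [σ'', hi]]
    simp [σ'', smul_sub]
  have hfar : ‖cantorMap s d σ - cantorMap s d σ''‖ ≤ κ * ∑' i, s (k + 1 + i) :=
    norm_cantorMap_sub_le hs hsum hd hκ fun i hi => by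
      rcases (Nat.lt_succ_iff.1 hi).lt_or_eq with hi | rfl
      · simp [σ'', hi.ne, hσ i hi]
      · simp [σ'']
  have hnear : τ * s k ≤ ‖cantorMap s d σ'' - cantorMap s d σ'‖ := by
    rw [hsingle, norm_smul, Real.norm_of_nonneg (hs k), mul_comm]
    exact mul_le_mul_of_nonneg_left (hτ k _ _ hk) (hs k)
  have := norm_sub_le_norm_sub_add_norm_sub (cantorMap s d σ'') (cantorMap s d σ)
    (cantorMap s d σ')
  rw [norm_sub_rev (cantorMap s d σ'') (cantorMap s d σ)] at this
  linarith

theorem sep_le_norm_cantorMap_sub {R : ℕ → ℝ} {M τ : ℝ} (hs : ∀ n, 0 ≤ s n) (hsum : Summable s)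
    (hR : ∀ n, R n = ∑' i, s (n + i)) (hd : ∀ n a, ‖d n a‖ ≤ K)
    (hκ : ∀ n a b, ‖d n a - d n b‖ ≤ κ) (hτ : ∀ n a b, a ≠ b → τ ≤ ‖d n a - d n b‖)
    (hsep : ∀ n, κ * R (n + 1) ≤ M * (τ * s n)) {σ σ' : ℕ → α} {k : ℕ}
    (hσ : ∀ i < k, σ i = σ' i) (hk : σ k ≠ σ' k) :
    (1 - M) * (τ * s k) ≤ ‖cantorMap s d σ - cantorMap s d σ'‖ := by
  have := le_norm_cantorMap_sub hs hsum hd hκ hτ hσ hk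
  rw [← hR] at this
  linarith [hsep k]

end CantorMap

section CantorPacking

variable {V : Type*} [NormedAddCommGroup V] [NormedSpace ℝ V] [CompleteSpace V] {N : ℕ}
  {d : ℕ → Fin N → V} {s R : ℕ → ℝ} {M K κ : ℝ}

theorem dist_cantorMap_le_tail_succ (hs : ∀ n, 0 < s n) (hsum : Summable s)
    (hR : ∀ n, R n = ∑' i, s (n + i)) (hRM : ∀ n, R (n + 1) ≤ M * s n)
    (hd : ∀ n a, ‖d n a‖ ≤ K) (hκ : ∀ n a b, ‖d n a - d n b‖ ≤ κ) {k : ℕ} (hk : κ * M ^ k ≤ 1)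
    {n : ℕ} {σ σ' : ℕ → Fin N} (hσ : ∀ i < n + 1 + k, σ i = σ' i) :
    dist (cantorMap s d σ) (cantorMap s d σ') ≤ R (n + 1) := by
  have hκ₀ : 0 ≤ κ := by simpa using hκ 0 (σ 0) (σ 0)
  rw [dist_eq_norm]
  calc ‖cantorMap s d σ - cantorMap s d σ'‖ ≤ κ * R (n + 1 + k) := by
        rw [hR]
        exact norm_cantorMap_sub_le (fun n => (hs n).le) hsum hd hκ hσ
    _ ≤ κ * (M ^ k * R (n + 1)) := by
        gcongr; exact tail_add_le_of_tail_succ_le hs hsum hR hRM _ _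
    _ ≤ R (n + 1) := by nlinarith [tail_pos hs hsum hR (n + 1)]

theorem packMeasure_range_cantorMap_ne_top (hs : ∀ n, 0 < s n) (hsum : Summable s)
    (hR : ∀ n, R n = ∑' i, s (n + i)) (hRM : ∀ n, R (n + 1) ≤ M * s n) (hM : M < 1)
    (hd : ∀ n a, ‖d n a‖ ≤ K) (hκ : ∀ n a b, ‖d n a - d n b‖ ≤ κ) {b b' : ℝ} (hb' : 0 ≤ b')
    (hbb' : b' < b) (hev : ∀ᶠ n in atTop, (N : ℝ) ^ n ≤ s n ^ (-b')) :
    packMeasure (fun x => x ^ b) (range (cantorMap s d)) ≠ ⊤ := by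
  have hM₀ := pos_of_tail_succ_le hs hsum hR hRM
  have hb : 0 < b := hb'.trans_lt hbb'
  obtain ⟨k, hk⟩ : ∃ k, κ * M ^ k ≤ 1 := by
    have := (tendsto_pow_atTop_nhds_zero_of_lt_one hM₀.le hM).const_mul κ
    rw [mul_zero] at this
    exact (this.eventually_le_const one_pos).exists
  let A : ∀ n, (Fin (n + 1 + k) → Fin N) → Set V := fun n w =>
    cantorMap s d '' {σ | ∀ t : Fin (n + 1 + k), σ t = w t}
  have hcov : ∀ n, range (cantorMap s d) ⊆ ⋃ w, A n w := by
    rintro n _ ⟨σ, rfl⟩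
    exact mem_iUnion.2 ⟨fun t => σ t, σ, fun t => rfl, rfl⟩
  have hA : ∀ n w, ∀ x ∈ A n w, ∀ y ∈ A n w, dist x y ≤ R (n + 1) := by
    rintro n w _ ⟨σ, hσ, rfl⟩ _ ⟨σ', hσ', rfl⟩
    exact dist_cantorMap_le_tail_succ hs hsum hR hRM hd hκ hk fun i hi =>
      (hσ ⟨i, hi⟩).trans (hσ' ⟨i, hi⟩).symm
  have hsumm : Summable fun n => (N : ℝ) ^ (n + 1 + k) * (2 * R n) ^ b := by
    refine ((summable_pow_mul_tail_rpow hs hsum hR hRM hM hb' hbb' hev).mul_left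
      ((N : ℝ) ^ (1 + k) * 2 ^ b)).congr fun n => ?_
    rw [Real.mul_rpow zero_le_two (tail_pos hs hsum hR n).le, add_assoc n, pow_add]
    ring
  have hbound := packPreδ_le_tsum_of_cover (h := fun x => x ^ b)
    (fun x hx y _ hxy => Real.rpow_le_rpow hx hxy hb.le) (Real.zero_rpow hb.ne').le
    (tendsto_tail hR) A hcov hA
  refine ne_top_of_le_ne_top ?_ <| ((packMeasure_le_packPre _).trans
    (packPre_le_packPreδ _ (tail_pos hs hsum hR 0))).trans hbound
  have hterm : ∀ n, (Fintype.card (Fin (n + 1 + k) → Fin N) : ℝ≥0∞)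
      * ENNReal.ofReal ((2 * R n) ^ b) = ENNReal.ofReal ((N : ℝ) ^ (n + 1 + k) * (2 * R n) ^ b) :=
    fun n => by rw [ENNReal.ofReal_mul (by positivity)]; simp
  rw [tsum_congr hterm, ← ENNReal.ofReal_tsum_of_nonneg (fun n => mul_nonneg (by positivity)
    (Real.rpow_nonneg (by linarith [tail_pos hs hsum hR n]) b)) hsumm]
  exact ENNReal.ofReal_ne_top

theorem exists_separated_cantorMap (hs : ∀ n, 0 < s n) (hsum : Summable s)
    (hR : ∀ n, R n = ∑' i, s (n + i)) (hRM : ∀ n, R (n + 1) ≤ M * s n) (hM : M < 1)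
    (hd : ∀ n a, ‖d n a‖ ≤ K) (hκ : ∀ n a b, ‖d n a - d n b‖ ≤ κ) {τ : ℝ} (hτ₀ : 0 ≤ τ)
    (hτ : ∀ n a b, a ≠ b → τ ≤ ‖d n a - d n b‖) (hsep : ∀ n, κ * R (n + 1) ≤ M * (τ * s n))
    (σ : ℕ → Fin N) (m k : ℕ) :
    ∃ y : (Fin (k - m) → Fin N) → V,
      (∀ w, y w ∈ range (cantorMap s d) ∧ dist (y w) (cantorMap s d σ) ≤ κ * R m) ∧
        Pairwise fun w w' => (1 - M) * (τ * s k) ≤ dist (y w) (y w') := by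
  have hs' : ∀ n, 0 ≤ s n := fun n => (hs n).le
  obtain ⟨F, hFσ, hFsep⟩ := exists_prefix_extensions σ m k
  refine ⟨fun w => cantorMap s d (F w), fun w => ⟨mem_range_self _, ?_⟩, fun w w' hne => ?_⟩
  · rw [dist_eq_norm, hR]
    exact norm_cantorMap_sub_le hs' hsum hd hκ (hFσ w)
  · obtain ⟨j, hjk, hagree, hj⟩ := hFsep w w' hne
    rw [dist_eq_norm]
    refine le_trans ?_ (sep_le_norm_cantorMap_sub hs' hsum hR hd hκ hτ hsep hagree hj)
    have hM' : 0 ≤ 1 - M := by linarith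
    gcongr
    exact antitone_of_tail_succ_le hs hsum hR hRM hM.le hjk.le

theorem packMeasure_range_cantorMap_eq_top (hN : 0 < N) (hs : ∀ n, 0 < s n) (hsum : Summable s)
    (hR : ∀ n, R n = ∑' i, s (n + i)) (hRM : ∀ n, R (n + 1) ≤ M * s n) (hM : M < 1)
    (hd : ∀ n a, ‖d n a‖ ≤ K) (hκ : ∀ n a b, ‖d n a - d n b‖ ≤ κ) {τ : ℝ} (hτ₀ : 0 < τ)
    (hτ : ∀ n a b, a ≠ b → τ ≤ ‖d n a - d n b‖) (hsep : ∀ n, κ * R (n + 1) ≤ M * (τ * s n))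
    {b b' : ℝ} (hbb' : b < b') (hfreq : ∃ᶠ n in atTop, s n ^ (-b') ≤ (N : ℝ) ^ n) :
    packMeasure (fun x => x ^ b) (range (cantorMap s d)) = ⊤ := by
  have : Nonempty (Fin N) := ⟨⟨0, hN⟩⟩
  refine packMeasure_eq_top_of_isCompact
    (isCompact_range (continuous_cantorMap (fun n => (hs n).le) hsum hd)) (range_nonempty _) ?_
  rintro c _ ⟨σ, rfl⟩ ε hε hsub
  obtain ⟨m, hm⟩ : ∃ m, κ * R m < ε := by
    have := (tendsto_tail hR).const_mul κ
    rw [mul_zero] at this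
    exact (this.eventually_lt_const hε).exists
  set c₀ := (1 - M) * τ / 2
  have hc₀ : 0 < c₀ := by have : 0 < 1 - M := sub_pos.2 hM; positivity
  refine iInf_eq_top.2 fun δ => iInf_eq_top.2 fun hδ =>
    ENNReal.eq_top_of_forall_nnreal_le fun A => ?_
  have hsmall : ∀ᶠ k in atTop, c₀ * s k / 2 ≤ δ := by
    have := (hsum.tendsto_atTop_zero.const_mul c₀).div_const 2
    rw [mul_zero, zero_div] at this
    exact this.eventually_le_const hδ
  obtain ⟨k, hA, hkδ⟩ := ((frequently_le_pow_sub_mul_rpow hN hs hsum.tendsto_atTop_zero hbb'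
    hfreq m hc₀ A).and_eventually hsmall).exists
  obtain ⟨y, hy, hysep⟩ :=
    exists_separated_cantorMap hs hsum hR hRM hM hd hκ hτ₀.le hτ hsep σ m k
  calc (A : ℝ≥0∞) = ENNReal.ofReal A := by simp
    _ ≤ ENNReal.ofReal ((N : ℝ) ^ (k - m) * (c₀ * s k) ^ b) := ENNReal.ofReal_le_ofReal hA
    _ = Fintype.card (Fin (k - m) → Fin N) * ENNReal.ofReal ((2 * (c₀ * s k / 2)) ^ b) := by
        rw [ENNReal.ofReal_mul (by positivity), mul_div_cancel₀ _ two_ne_zero]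
        simp
    _ ≤ packPreδ (fun x => x ^ b) c δ :=
        card_mul_le_packPreδ_of_subset_closure (by have := hs k; positivity) hkδ y
          (fun w => hsub ⟨(hy w).1, mem_ball.2 ((hy w).2.trans_lt hm)⟩)
          fun w w' hne => le_of_eq_of_le (by ring) (hysep hne)

end CantorPacking

/-- The packing dimension of `C_{s,𝒟}` equals
`limsup_n (−n ln N)/ln(sₙ)`.  Here `Rₙ = ∑_{i ≥ n} sᵢ` is the tail of the series after
the first `n` terms and the separation condition `κRₙ₊₁ ≤ M τ sₙ`, `M < 1`, holds. -/
theorem stmt_15 (p N : ℕ) (hN : 2 ≤ N)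
    (s : ℕ → ℝ) (hs : ∀ n, 0 < s n) (hsum : Summable s)
    (d : ℕ → Fin N → EuclideanSpace ℝ (Fin p))
    (hzero : ∀ n, d n ⟨0, by omega⟩ = 0)
    (κ τ : ℝ) (hτ : 0 < τ)
    (hκ : ∀ (n : ℕ) (i j : Fin N), i ≠ j → ‖d n i - d n j‖ ≤ κ)
    (hτd : ∀ (n : ℕ) (i j : Fin N), i ≠ j → τ ≤ ‖d n i - d n j‖)
    (R : ℕ → ℝ) (hR : ∀ n, R n = ∑' i, s (n + i))
    (M : ℝ) (hM : M < 1) (hsep : ∀ n, κ * R (n + 1) ≤ M * (τ * s n)) :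
    packDim (Set.range fun σ : ℕ → Fin N => ∑' i, s i • d i (σ i))
      = Filter.atTop.limsup
          (fun n : ℕ => ENNReal.ofReal (-((n : ℝ) * Real.log N) / Real.log (s n))) := by
  have hN₀ : 0 < N := by omega
  have h01 : (⟨0, hN₀⟩ : Fin N) ≠ ⟨1, hN⟩ := by simp [Fin.ext_iff]
  have hτκ : τ ≤ κ := (hτd 0 _ _ h01).trans (hκ 0 _ _ h01)
  have hκ' : ∀ n a b, ‖d n a - d n b‖ ≤ κ := fun n a b => by
    rcases eq_or_ne a b with rfl | hab
    · simpa using hτ.le.trans hτκ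
    · exact hκ n a b hab
  have hd : ∀ n a, ‖d n a‖ ≤ κ := fun n a => by simpa [hzero] using hκ' n a ⟨0, hN₀⟩
  have hRM := tail_succ_le_of_sep hs hsum hR hτ hτκ hsep
  have hs₀ := hsum.tendsto_atTop_zero
  refine packDim_eq_of (fun b b' hLb' hb'b => ?_) fun b b' hbb' hb'L => ?_
  · exact packMeasure_range_cantorMap_ne_top hs hsum hR hRM hM hd hκ' b'.2
      (by exact_mod_cast hb'b) (eventually_pow_le_rpow_of_limsup_lt hN₀ hs hs₀ hLb')
  · exact packMeasure_range_cantorMap_eq_top hN₀ hs hsum hR hRM hM hd hκ' hτ hτd hsep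
      (by exact_mod_cast hbb') (frequently_rpow_le_pow_of_lt_limsup hN₀ hs hs₀ hb'L)
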